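/- arXiv:2504.13620 — 7 statements merged into one kernel-verified Lean document; each statement's English description precedes it below -/
import Mathlib

section
/- Proposition 2.3(v) (conditional translation equivariance): Let Ω and F be nonempty standard Borel spaces, μ a probability measure on Ω, Z : Ω → F measurable, X : Ω → ℝ measurable, and f : F → ℝ measurable. Then for μ-almost every ω, condDistrib (fun ω' => X ω' + f (Z ω')) Z μ (Z ω) = (condDistrib X Z μ (Z ω)).map (fun t => t + f (Z ω)). Consequently, if T : Measure ℝ → EReal satisfies T (ν.map (fun t => t + c)) = T ν + (c : EReal) for every probability measure ν on ℝ and every c ∈ ℝ, then T (condDistrib (fun ω' => X ω' + f (Z ω')) Z μ (Z ω)) = T (condDistrib X Z μ (Z ω)) + (f (Z ω) : EReal) for μ-almost every ω. -/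
/-!
`(Z, X + f ∘ Z)` is the image of `(Z, X)` under the shear `(z, x) ↦ (z, x + f z)`. Pushing the
disintegration `μ.map Z ⊗ₘ condDistrib X Z μ` of the law of `(Z, X)` along the shear yields a
disintegration of the law of `(Z, X + f ∘ Z)` whose kernel at `z` is `condDistrib X Z μ z`
translated by `f z`; uniqueness of disintegrations identifies it with the conditional law.
-/

open MeasureTheory ProbabilityTheory

namespace ProbabilityTheory

variable {α β Ω Ω' : Type*} {mα : MeasurableSpace α} {mβ : MeasurableSpace β}
  [MeasurableSpace Ω] [MeasurableSpace Ω'] {g : β × Ω → Ω'}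

lemma Kernel.map_id_prod_apply (κ : Kernel β Ω) [IsSFiniteKernel κ] (hg : Measurable g)
    (b : β) :
    (Kernel.id ×ₖ κ).map g b = (κ b).map fun y ↦ g (b, y) := by
  rw [Kernel.map_apply _ hg, Kernel.prod_apply, Kernel.id_apply, Measure.dirac_prod,
    Measure.map_map hg measurable_prodMk_left]
  rfl

lemma _root_.MeasureTheory.Measure.map_prodMk_compProd (μ : Measure β) [SFinite μ]
    (κ : Kernel β Ω) [IsSFiniteKernel κ] (hg : Measurable g) :
    (μ ⊗ₘ κ).map (fun p ↦ (p.1, g p)) = μ ⊗ₘ (Kernel.id ×ₖ κ).map g := by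
  have hpair : Measurable fun p : β × Ω ↦ (p.1, g p) := measurable_fst.prodMk hg
  ext s hs
  rw [Measure.map_apply hpair hs, Measure.compProd_apply (hpair hs), Measure.compProd_apply hs]
  refine lintegral_congr fun b ↦ ?_
  rw [Kernel.map_id_prod_apply κ hg,
    Measure.map_apply (f := fun y ↦ g (b, y)) (hg.comp measurable_prodMk_left)
      (measurable_prodMk_left hs)]
  rfl

variable [StandardBorelSpace Ω'] [Nonempty Ω'] [StandardBorelSpace Ω] [Nonempty Ω]
  {μ : Measure α} [IsFiniteMeasure μ] {X : α → β} {Y : α → Ω}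

lemma condDistrib_comp_prodMk (hX : Measurable X) (hY : Measurable Y) (hg : Measurable g) :
    condDistrib (fun a ↦ g (X a, Y a)) X μ
      =ᵐ[μ.map X] (Kernel.id ×ₖ condDistrib Y X μ).map g := by
  refine condDistrib_ae_eq_of_measure_eq_compProd X (hg.comp (hX.prodMk hY)).aemeasurable ?_
  rw [← Measure.map_prodMk_compProd _ _ hg, compProd_map_condDistrib hY.aemeasurable,
    Measure.map_map (measurable_fst.prodMk hg) (hX.prodMk hY)]
  rfl

lemma ae_condDistrib_comp_prodMk_apply (hX : Measurable X) (hY : Measurable Y)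
    (hg : Measurable g) :
    ∀ᵐ a ∂μ, condDistrib (fun a ↦ g (X a, Y a)) X μ (X a)
      = (condDistrib Y X μ (X a)).map fun y ↦ g (X a, y) := by
  filter_upwards [ae_of_ae_map hX.aemeasurable (condDistrib_comp_prodMk hX hY hg)] with a ha
  rw [ha, Kernel.map_id_prod_apply _ hg]

end ProbabilityTheory

theorem condDistrib_add_and_gauge_translation_equivariant_general
    {Ω F : Type*} [MeasurableSpace Ω]
    [MeasurableSpace F]
    (μ : Measure Ω) [IsProbabilityMeasure μ]
    (Z : Ω → F) (hZ : Measurable Z) (X : Ω → ℝ) (hX : Measurable X)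
    (f : F → ℝ) (hf : Measurable f) :
    (∀ᵐ ω ∂μ, condDistrib (fun ω' => X ω' + f (Z ω')) Z μ (Z ω)
        = (condDistrib X Z μ (Z ω)).map (fun t => t + f (Z ω))) ∧
      ∀ T : Measure ℝ → EReal,
        (∀ (ν : Measure ℝ), IsProbabilityMeasure ν → ∀ c : ℝ,
          T (ν.map (fun t => t + c)) = T ν + (c : EReal)) →
        ∀ᵐ ω ∂μ, T (condDistrib (fun ω' => X ω' + f (Z ω')) Z μ (Z ω))
          = T (condDistrib X Z μ (Z ω)) + (f (Z ω) : EReal) := by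
  have hshift : ∀ᵐ ω ∂μ, condDistrib (fun ω' => X ω' + f (Z ω')) Z μ (Z ω)
      = (condDistrib X Z μ (Z ω)).map (fun t => t + f (Z ω)) :=
    ae_condDistrib_comp_prodMk_apply (g := fun p : F × ℝ ↦ p.2 + f p.1) hZ hX
      (measurable_snd.add (hf.comp measurable_fst))
  refine ⟨hshift, fun T hT ↦ ?_⟩
  filter_upwards [hshift] with ω h
  rw [h, hT _ inferInstance]

/-- Proposition 2.3(v): conditional translation equivariance. -/
theorem condDistrib_add_and_gauge_translation_equivariant
    {Ω F : Type*} [MeasurableSpace Ω] [StandardBorelSpace Ω] [Nonempty Ω]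
    [MeasurableSpace F] [StandardBorelSpace F] [Nonempty F]
    (μ : Measure Ω) [IsProbabilityMeasure μ]
    (Z : Ω → F) (hZ : Measurable Z) (X : Ω → ℝ) (hX : Measurable X)
    (f : F → ℝ) (hf : Measurable f) :
    (∀ᵐ ω ∂μ, condDistrib (fun ω' => X ω' + f (Z ω')) Z μ (Z ω)
        = (condDistrib X Z μ (Z ω)).map (fun t => t + f (Z ω))) ∧
      ∀ T : Measure ℝ → EReal,
        (∀ (ν : Measure ℝ), IsProbabilityMeasure ν → ∀ c : ℝ,
          T (ν.map (fun t => t + c)) = T ν + (c : EReal)) →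
        ∀ᵐ ω ∂μ, T (condDistrib (fun ω' => X ω' + f (Z ω')) Z μ (Z ω))
          = T (condDistrib X Z μ (Z ω)) + (f (Z ω) : EReal) :=
  condDistrib_add_and_gauge_translation_equivariant_general μ Z hZ X hX f hf
end

section
/- Theorem 4.3 (G2), unconditional form (constant preservation of the set-valued gauge): Let E be a finite-dimensional real inner product space, (Ω, μ) a probability space, and g : (Ω → EReal) → EReal a functional with g (fun _ => c) = c for every c ∈ EReal. If X : Ω → Set E is the constant map X ω = F for a nonempty closed convex set F ⊆ E, then G(X) = F, i.e. ⋂_{w ∈ sphere 0 1} {x ∈ E : (⟪x, w⟫ : EReal) ≤ g (fun ω => h (X ω) w)} = F. -/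
open MeasureTheory RealInnerProductSpace

/-- The support function of a set `A ⊆ E` in direction `w`, with values in the
extended reals (equal to `⊥` for `A = ∅`). -/
noncomputable def suppFn {E : Type*} [NormedAddCommGroup E] [InnerProductSpace ℝ E]
    (A : Set E) (w : E) : EReal :=
  ⨆ x ∈ A, ((⟪x, w⟫ : ℝ) : EReal)

/-- The unconditional set-valued gauge of a set-valued map `X`, for a functional `g`. -/
def gaugeSet {E : Type*} [NormedAddCommGroup E] [InnerProductSpace ℝ E]
    {Ω : Type*} (g : (Ω → EReal) → EReal) (X : Ω → Set E) : Set E :=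
  ⋂ w ∈ Metric.sphere (0 : E) 1,
    {x : E | ((⟪x, w⟫ : ℝ) : EReal) ≤ g (fun ω => suppFn (X ω) w)}

/-!
For a constant map the normalization `g c = c` turns `G(X)` into the intersection of the
half-spaces `{x | ⟪x, w⟫ ≤ h F w}` over unit vectors `w`. Every such half-space contains `F`;
conversely a point outside the closed convex set `F` is strictly separated from it by
Hahn–Banach, the separating functional is `⟪·, v⟫` for some `v` by the Riesz representation
theorem, and `v ≠ 0` because `F` is nonempty, so `v / ‖v‖` is a unit direction whose
half-space misses the point.
-/

section SupportFunction

variable {E : Type*} [NormedAddCommGroup E] [InnerProductSpace ℝ E]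

theorem inner_le_suppFn {A : Set E} {x : E} (hx : x ∈ A) (w : E) :
    ((⟪x, w⟫ : ℝ) : EReal) ≤ suppFn A w :=
  le_iSup₂ (f := fun y (_ : y ∈ A) => ((⟪y, w⟫ : ℝ) : EReal)) x hx

theorem suppFn_le_coe {A : Set E} {w : E} {c : ℝ} (h : ∀ y ∈ A, ⟪y, w⟫ ≤ c) :
    suppFn A w ≤ c :=
  iSup₂_le fun y hy => EReal.coe_le_coe_iff.mpr (h y hy)

variable [CompleteSpace E]

theorem exists_inner_lt_of_notMem {F : Set E} (hFcl : IsClosed F) (hFconv : Convex ℝ F)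
    {x : E} (hx : x ∉ F) : ∃ (v : E) (u : ℝ), (∀ a ∈ F, ⟪a, v⟫ < u) ∧ u < ⟪x, v⟫ := by
  obtain ⟨f, u, hfF, hux⟩ := geometric_hahn_banach_closed_point hFconv hFcl hx
  have hf : ∀ y : E, ⟪y, (InnerProductSpace.toDual ℝ E).symm f⟫ = f y := fun y => by
    rw [real_inner_comm, InnerProductSpace.toDual_symm_apply]
  exact ⟨_, u, fun a ha => (hf a).trans_lt (hfF a ha), hux.trans_eq (hf x).symm⟩

theorem exists_mem_sphere_suppFn_lt {F : Set E} (hFne : F.Nonempty) (hFcl : IsClosed F)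
    (hFconv : Convex ℝ F) {x : E} (hx : x ∉ F) :
    ∃ w ∈ Metric.sphere (0 : E) 1, suppFn F w < ((⟪x, w⟫ : ℝ) : EReal) := by
  obtain ⟨v, u, hvF, hux⟩ := exists_inner_lt_of_notMem hFcl hFconv hx
  obtain ⟨a, ha⟩ := hFne
  have hv : v ≠ 0 := by
    rintro rfl
    have := hvF a ha
    simp only [inner_zero_right] at this hux
    linarith
  have hc : 0 < ‖v‖⁻¹ := by positivity
  refine ⟨‖v‖⁻¹ • v, by simp [norm_smul, hv], ?_⟩
  calc suppFn F (‖v‖⁻¹ • v) ≤ ((‖v‖⁻¹ * u : ℝ) : EReal) :=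
        suppFn_le_coe fun y hy => by
          rw [real_inner_smul_right]
          exact (mul_lt_mul_of_pos_left (hvF y hy) hc).le
    _ < ((⟪x, ‖v‖⁻¹ • v⟫ : ℝ) : EReal) := by
        rw [real_inner_smul_right]
        exact_mod_cast mul_lt_mul_of_pos_left hux hc

theorem biInter_sphere_inner_le_suppFn {F : Set E} (hFne : F.Nonempty) (hFcl : IsClosed F)
    (hFconv : Convex ℝ F) :
    ⋂ w ∈ Metric.sphere (0 : E) 1, {x : E | ((⟪x, w⟫ : ℝ) : EReal) ≤ suppFn F w} = F := by
  refine Set.Subset.antisymm (fun x hx => ?_)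
    fun x hx => Set.mem_iInter₂.mpr fun w _ => inner_le_suppFn hx w
  by_contra hxF
  obtain ⟨w, hw, hlt⟩ := exists_mem_sphere_suppFn_lt hFne hFcl hFconv hxF
  exact (Set.mem_iInter₂.mp hx w hw).not_gt hlt

end SupportFunction

theorem gaugeSet_const_general
    {E : Type*} [NormedAddCommGroup E] [InnerProductSpace ℝ E] [FiniteDimensional ℝ E]
    {Ω : Type*}
    (g : (Ω → EReal) → EReal) (hg : ∀ c : EReal, g (fun _ => c) = c)
    (F : Set E) (hFne : F.Nonempty) (hFcl : IsClosed F) (hFconv : Convex ℝ F) :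
    gaugeSet g (fun _ : Ω => F) = F := by
  simp only [gaugeSet, hg]
  exact biInter_sphere_inner_le_suppFn hFne hFcl hFconv

/-- Theorem 4.3 (G2), unconditional form: the set-valued gauge of a deterministic
nonempty closed convex set is that set. -/
theorem gaugeSet_const
    {E : Type*} [NormedAddCommGroup E] [InnerProductSpace ℝ E] [FiniteDimensional ℝ E]
    {Ω : Type*} [MeasurableSpace Ω] (μ : Measure Ω) [IsProbabilityMeasure μ]
    (g : (Ω → EReal) → EReal) (hg : ∀ c : EReal, g (fun _ => c) = c)
    (F : Set E) (hFne : F.Nonempty) (hFcl : IsClosed F) (hFconv : Convex ℝ F) :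
    gaugeSet g (fun _ : Ω => F) = F :=
  gaugeSet_const_general g hg F hFne hFcl hFconv
end

section
/- Theorem 4.3 (G3), unconditional form (equivariance of the set-valued gauge under invertible linear maps): Let E be a finite-dimensional real inner product space, (Ω, μ) a probability space, and g : (Ω → EReal) → EReal positively homogeneous, i.e. g (fun ω => (c : EReal) * f ω) = (c : EReal) * g f for every real c > 0 and every f : Ω → EReal. Then for every linear equivalence Γ : E ≃ₗ[ℝ] E and every set-valued map X : Ω → Set E, G(fun ω => Γ '' (X ω)) = Γ '' G(X). -/
/-! Positive homogeneity of `g` lets the unit sphere in the definition of the gauge be replaced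
by all nonzero directions. The support function transforms as `h (Γ '' A) w = h A (Γ† w)`, and
`⟪x, w⟫ = ⟪Γ⁻¹ x, Γ† w⟫`; since the adjoint `Γ†` permutes the nonzero directions, the half-space
conditions defining `G(Γ X)` at `x` are exactly those defining `G(X)` at `Γ⁻¹ x`. -/

open MeasureTheory RealInnerProductSpace

lemma EReal.coe_inv_mul_coe_mul {c : ℝ} (hc : c ≠ 0) (a : EReal) :
    ((c⁻¹ : ℝ) : EReal) * (c * a) = a := by
  rw [← mul_assoc, ← EReal.coe_mul, inv_mul_cancel₀ hc, EReal.coe_one, one_mul]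

noncomputable def erealMulLeftOrderIso (c : ℝ) (hc : 0 < c) : EReal ≃o EReal :=
  Equiv.toOrderIso
    { toFun := fun a => c * a
      invFun := fun a => ((c⁻¹ : ℝ) : EReal) * a
      left_inv := EReal.coe_inv_mul_coe_mul hc.ne'
      right_inv := fun a => by simpa using EReal.coe_inv_mul_coe_mul (inv_ne_zero hc.ne') a }
    (fun _ _ h => mul_le_mul_of_nonneg_left h (by exact_mod_cast hc.le))
    (fun _ _ h => mul_le_mul_of_nonneg_left h (by exact_mod_cast (inv_pos.2 hc).le))

@[simp]
lemma erealMulLeftOrderIso_apply (c : ℝ) (hc : 0 < c) (a : EReal) :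
    erealMulLeftOrderIso c hc a = c * a := rfl

namespace LinearEquiv

variable {𝕜 E F : Type*} [RCLike 𝕜] [NormedAddCommGroup E] [InnerProductSpace 𝕜 E]
  [NormedAddCommGroup F] [InnerProductSpace 𝕜 F] [FiniteDimensional 𝕜 E] [FiniteDimensional 𝕜 F]

noncomputable def adjoint (e : E ≃ₗ[𝕜] F) : F ≃ₗ[𝕜] E :=
  ofLinearMap (f := LinearMap.adjoint (e : E →ₗ[𝕜] F)) (g := LinearMap.adjoint (e.symm : F →ₗ[𝕜] E))
    (by rw [← LinearMap.adjoint_comp, e.symm_comp, LinearMap.adjoint_id])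
    (by rw [← LinearMap.adjoint_comp, e.comp_symm, LinearMap.adjoint_id])

@[simp]
lemma coe_adjoint (e : E ≃ₗ[𝕜] F) : (e.adjoint : F → E) = LinearMap.adjoint (e : E →ₗ[𝕜] F) :=
  rfl

end LinearEquiv

section SupportFunction

variable {E : Type*} [NormedAddCommGroup E] [InnerProductSpace ℝ E]

lemma suppFn_smul (A : Set E) {c : ℝ} (hc : 0 < c) (w : E) :
    suppFn A (c • w) = c * suppFn A w := by
  simp only [suppFn, ← erealMulLeftOrderIso_apply c hc, OrderIso.map_iSup,
    real_inner_smul_right, EReal.coe_mul]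

lemma suppFn_image {F : Type*} [NormedAddCommGroup F] [InnerProductSpace ℝ F]
    [FiniteDimensional ℝ E] [FiniteDimensional ℝ F] (T : E →ₗ[ℝ] F) (A : Set E) (w : F) :
    suppFn (T '' A) w = suppFn A (LinearMap.adjoint T w) := by
  simp only [suppFn, iSup_image, LinearMap.adjoint_inner_right]

end SupportFunction

section Gauge

variable {E Ω : Type*} [NormedAddCommGroup E] [InnerProductSpace ℝ E]

def IsPositivelyHomogeneous (g : (Ω → EReal) → EReal) : Prop :=
  ∀ (c : ℝ), 0 < c → ∀ f : Ω → EReal, g (fun ω => (c : EReal) * f ω) = (c : EReal) * g f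

variable {g : (Ω → EReal) → EReal}

lemma IsPositivelyHomogeneous.inner_le_gauge_smul_iff (hg : IsPositivelyHomogeneous g)
    (X : Ω → Set E) (x w : E) {c : ℝ} (hc : 0 < c) :
    ((⟪x, c • w⟫ : ℝ) : EReal) ≤ g (fun ω => suppFn (X ω) (c • w)) ↔
      ((⟪x, w⟫ : ℝ) : EReal) ≤ g (fun ω => suppFn (X ω) w) := by
  simp only [suppFn_smul _ hc, hg c hc, real_inner_smul_right, EReal.coe_mul]
  simpa using (erealMulLeftOrderIso c hc).le_iff_le

lemma IsPositivelyHomogeneous.mem_gaugeSet_iff (hg : IsPositivelyHomogeneous g)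
    (X : Ω → Set E) (x : E) :
    x ∈ gaugeSet g X ↔ ∀ w ≠ 0, ((⟪x, w⟫ : ℝ) : EReal) ≤ g (fun ω => suppFn (X ω) w) := by
  simp only [gaugeSet, Set.mem_iInter, Set.mem_ofPred_eq, mem_sphere_zero_iff_norm]
  refine ⟨fun h w hw => ?_, fun h w hw => h w (norm_ne_zero_iff.1 (hw ▸ one_ne_zero))⟩
  have hc : 0 < ‖w‖ := norm_pos_iff.2 hw
  have hunit : ‖‖w‖⁻¹ • w‖ = 1 := by
    rw [norm_smul, norm_inv, norm_norm, inv_mul_cancel₀ hc.ne']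
  rw [← smul_inv_smul₀ hc.ne' w, hg.inner_le_gauge_smul_iff X x _ hc]
  exact h _ hunit

end Gauge

theorem gaugeSet_linear_equivariant_general
    {E : Type*} [NormedAddCommGroup E] [InnerProductSpace ℝ E] [FiniteDimensional ℝ E]
    {Ω : Type*}
    (g : (Ω → EReal) → EReal)
    (hg : ∀ (c : ℝ), 0 < c → ∀ f : Ω → EReal,
      g (fun ω => (c : EReal) * f ω) = (c : EReal) * g f)
    (Γ : E ≃ₗ[ℝ] E) (X : Ω → Set E) :
    gaugeSet g (fun ω => Γ '' (X ω)) = Γ '' gaugeSet g X := by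
  have hg : IsPositivelyHomogeneous g := hg
  ext x
  rw [Γ.image_eq_preimage_symm (gaugeSet g X), Set.mem_preimage, hg.mem_gaugeSet_iff,
    hg.mem_gaugeSet_iff]
  conv_rhs => rw [Γ.adjoint.surjective.forall]
  refine forall_congr' fun w => ?_
  rw [Γ.adjoint.map_ne_zero_iff, Γ.coe_adjoint, LinearMap.adjoint_inner_right]
  simp only [← suppFn_image, LinearEquiv.coe_coe, LinearEquiv.apply_symm_apply]

/-- Theorem 4.3 (G3), unconditional form: for a positively homogeneous functional `g`,
the set-valued gauge is equivariant under invertible linear maps. -/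
theorem gaugeSet_linear_equivariant
    {E : Type*} [NormedAddCommGroup E] [InnerProductSpace ℝ E] [FiniteDimensional ℝ E]
    {Ω : Type*} [MeasurableSpace Ω] (μ : Measure Ω) [IsProbabilityMeasure μ]
    (g : (Ω → EReal) → EReal)
    (hg : ∀ (c : ℝ), 0 < c → ∀ f : Ω → EReal,
      g (fun ω => (c : EReal) * f ω) = (c : EReal) * g f)
    (Γ : E ≃ₗ[ℝ] E) (X : Ω → Set E) :
    gaugeSet g (fun ω => Γ '' (X ω)) = Γ '' gaugeSet g X :=
  gaugeSet_linear_equivariant_general g hg Γ X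
end

section
/- Theorem 4.3 (G5), unconditional form (translation equivariance of the set-valued gauge): Let E be a finite-dimensional real inner product space, (Ω, μ) a probability space, and g : (Ω → EReal) → EReal translation equivariant, i.e. g (fun ω => f ω + (c : EReal)) = g f + (c : EReal) for every c ∈ ℝ and every f : Ω → EReal. Then for every set-valued map X : Ω → Set E and every z ∈ E, G(fun ω => (fun x => x + z) '' (X ω)) = (fun x => x + z) '' G(X), i.e. translating the random set by a deterministic vector z translates its set-valued gauge by z. -/
open MeasureTheory RealInnerProductSpace

/-! Translation by `z` shifts the support function in direction `w` by the real number `⟪z, w⟫`,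
and `g` commutes with real shifts, so both sides of each defining inequality of the gauge move
by the same finite amount. -/

noncomputable def EReal.addRightOrderIso (c : ℝ) : EReal ≃o EReal where
  toFun x := x + c
  invFun x := x - c
  left_inv _ := EReal.add_sub_cancel_right
  right_inv _ := EReal.sub_add_cancel
  map_rel_iff' := (EReal.addLECancellable_coe c).add_le_add_iff_right

lemma EReal.biSup_add_coe {ι : Type*} (s : Set ι) (f : ι → EReal) (c : ℝ) :
    ⨆ i ∈ s, (f i + c) = (⨆ i ∈ s, f i) + c :=
  (map_iSup₂ (EReal.addRightOrderIso c) fun i (_ : i ∈ s) => f i).symm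

lemma suppFn_image_add_right {E : Type*} [NormedAddCommGroup E] [InnerProductSpace ℝ E]
    (A : Set E) (w z : E) :
    suppFn ((· + z) '' A) w = suppFn A w + ((⟪z, w⟫ : ℝ) : EReal) := by
  simp only [suppFn, iSup_image, inner_add_left, EReal.coe_add]
  exact EReal.biSup_add_coe A _ _

lemma add_mem_gaugeSet_image_add_right_iff {E : Type*} [NormedAddCommGroup E]
    [InnerProductSpace ℝ E] {Ω : Type*} {g : (Ω → EReal) → EReal}
    (hg : ∀ (c : ℝ) (f : Ω → EReal), g (fun ω => f ω + (c : EReal)) = g f + (c : EReal))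
    (X : Ω → Set E) (x z : E) :
    x + z ∈ gaugeSet g (fun ω => (· + z) '' X ω) ↔ x ∈ gaugeSet g X := by
  simp only [gaugeSet, Set.mem_iInter, Set.mem_ofPred_eq, suppFn_image_add_right, hg,
    inner_add_left, EReal.coe_add, (EReal.addLECancellable_coe _).add_le_add_iff_right]

theorem gaugeSet_translation_equivariant_general
    {E : Type*} [NormedAddCommGroup E] [InnerProductSpace ℝ E]
    {Ω : Type*}
    (g : (Ω → EReal) → EReal)
    (hg : ∀ (c : ℝ) (f : Ω → EReal),
      g (fun ω => f ω + (c : EReal)) = g f + (c : EReal))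
    (X : Ω → Set E) (z : E) :
    gaugeSet g (fun ω => (fun x => x + z) '' (X ω))
      = (fun x => x + z) '' gaugeSet g X := by
  ext x
  rw [Set.image_add_right, Set.mem_preimage,
    ← add_mem_gaugeSet_image_add_right_iff hg X (x + -z) z, neg_add_cancel_right]

/-- Theorem 4.3 (G5), unconditional form: for a translation equivariant functional `g`,
translating the random set by a deterministic vector translates its set-valued gauge. -/
theorem gaugeSet_translation_equivariant
    {E : Type*} [NormedAddCommGroup E] [InnerProductSpace ℝ E] [FiniteDimensional ℝ E]
    {Ω : Type*} [MeasurableSpace Ω] (μ : Measure Ω) [IsProbabilityMeasure μ]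
    (g : (Ω → EReal) → EReal)
    (hg : ∀ (c : ℝ) (f : Ω → EReal),
      g (fun ω => f ω + (c : EReal)) = g f + (c : EReal))
    (X : Ω → Set E) (z : E) :
    gaugeSet g (fun ω => (fun x => x + z) '' (X ω))
      = (fun x => x + z) '' gaugeSet g X :=
  gaugeSet_translation_equivariant_general g hg X z
end

section
/- Half-space representation of a compact convex set plus a cone (deterministic core of Proposition 7.1): Let E be a finite-dimensional real inner product space, K ⊆ E a nonempty compact convex set, and C ⊆ E a closed convex cone. Then ⋂_{w ∈ Cᵒ} {x ∈ E : ⟪x, w⟫ ≤ hK w} = K + C, where hK w := sSup {⟪x, w⟫ | x ∈ K} is the (real-valued) support function of K, Cᵒ := {w ∈ E : ∀ c ∈ C, ⟪w, c⟫ ≤ 0} is the polar cone of C, and K + C is the Minkowski sum {k + c | k ∈ K, c ∈ C}. -/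
/-!
`K + C` is closed and convex, so a point `x ∉ K + C` is strictly separated from it by some
`w`. Since `⟪·, w⟫` is bounded above on `K + C` and `C` is a cone, `w` lies in the polar cone
of `C`; since `0 ∈ C`, the separation gives `⟪x, w⟫ > h_K(w)`.
-/

open RealInnerProductSpace Pointwise

/-- The real-valued support function of a (nonempty compact) set. -/
noncomputable def suppR {E : Type*} [NormedAddCommGroup E] [InnerProductSpace ℝ E]
    (K : Set E) (w : E) : ℝ :=
  sSup ((fun x => (⟪x, w⟫ : ℝ)) '' K)

open Set Filter Topology

theorem zero_mem_of_isClosed_of_pos_smul_mem {E : Type*} [AddCommGroup E] [Module ℝ E]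
    [TopologicalSpace E] [ContinuousSMul ℝ E] {C : Set E} (hCcl : IsClosed C)
    (hCne : C.Nonempty) (hCcone : ∀ (c : ℝ), 0 < c → ∀ x ∈ C, c • x ∈ C) : (0 : E) ∈ C := by
  obtain ⟨c₀, hc₀⟩ := hCne
  have hcont : Continuous fun t : ℝ => t • c₀ := continuous_id.smul continuous_const
  have hlim : Tendsto (fun t : ℝ => t • c₀) (𝓝[>] 0) (𝓝 0) :=
    (hcont.tendsto' 0 0 (zero_smul ℝ c₀)).mono_left nhdsWithin_le_nhds
  exact hCcl.mem_of_tendsto hlim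
    (eventually_mem_nhdsWithin.mono fun t ht => hCcone t ht c₀ hc₀)

theorem LinearMap.nonpos_of_bddAbove_image_add {E : Type*} [AddCommGroup E] [Module ℝ E]
    (f : E →ₗ[ℝ] ℝ) {K C : Set E} (hKne : K.Nonempty)
    (hCcone : ∀ (c : ℝ), 0 < c → ∀ x ∈ C, c • x ∈ C) (hf : BddAbove (f '' (K + C)))
    {c : E} (hc : c ∈ C) : f c ≤ 0 := by
  by_contra! hpos
  obtain ⟨k, hk⟩ := hKne
  obtain ⟨M, hM⟩ := hf
  have ht : 0 < (|M - f k| + 1) / f c := by positivity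
  have hle := hM ⟨_, add_mem_add hk (hCcone _ ht c hc), rfl⟩
  rw [map_add, map_smul, smul_eq_mul, div_mul_cancel₀ _ hpos.ne'] at hle
  linarith [le_abs_self (M - f k)]

theorem exists_inner_lt_lt_of_notMem {E : Type*} [NormedAddCommGroup E] [InnerProductSpace ℝ E]
    [CompleteSpace E] {s : Set E} {x : E} (hs₁ : Convex ℝ s) (hs₂ : IsClosed s) (hx : x ∉ s) :
    ∃ (w : E) (u : ℝ), (∀ a ∈ s, ⟪w, a⟫ < u) ∧ u < ⟪w, x⟫ := by
  obtain ⟨f, u, hfs, hfx⟩ := geometric_hahn_banach_closed_point hs₁ hs₂ hx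
  refine ⟨(InnerProductSpace.toDual ℝ E).symm f, u, ?_⟩
  simpa only [InnerProductSpace.toDual_symm_apply] using ⟨hfs, hfx⟩

section suppR

variable {E : Type*} [NormedAddCommGroup E] [InnerProductSpace ℝ E] {K : Set E}

theorem inner_le_suppR (hK : IsCompact K) {k : E} (hk : k ∈ K) (w : E) :
    ⟪k, w⟫ ≤ suppR K w :=
  le_csSup (hK.image (continuous_id.inner continuous_const)).bddAbove ⟨k, hk, rfl⟩

theorem suppR_le (hK : K.Nonempty) {w : E} {u : ℝ} (h : ∀ k ∈ K, ⟪k, w⟫ ≤ u) :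
    suppR K w ≤ u :=
  csSup_le (hK.image _) (forall_mem_image.2 h)

end suppR

/-- Half-space representation of a compact convex set plus a closed convex cone:
the intersection, over directions `w` in the polar cone of `C`, of the half-spaces
`{x : ⟪x, w⟫ ≤ h_K(w)}` equals the Minkowski sum `K + C`. -/
theorem halfspace_inter_polar_eq_add_cone
    {E : Type*} [NormedAddCommGroup E] [InnerProductSpace ℝ E] [FiniteDimensional ℝ E]
    (K : Set E) (hKne : K.Nonempty) (hKcomp : IsCompact K) (hKconv : Convex ℝ K)
    (C : Set E) (hCcl : IsClosed C) (hCconv : Convex ℝ C) (hCne : C.Nonempty)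
    (hCcone : ∀ (c : ℝ), 0 < c → ∀ x ∈ C, c • x ∈ C) :
    (⋂ w ∈ {w : E | ∀ c ∈ C, (⟪w, c⟫ : ℝ) ≤ 0}, {x : E | ⟪x, w⟫ ≤ suppR K w})
      = K + C := by
  refine Subset.antisymm (fun x hx => ?_) ?_
  · by_contra hxKC
    obtain ⟨w, u, hsep, hux⟩ := exists_inner_lt_lt_of_notMem (hKconv.add hCconv)
      (hCcl.add_left_of_isCompact hKcomp) hxKC
    have hpolar : ∀ c ∈ C, ⟪w, c⟫ ≤ 0 := fun c hc =>
      (innerₛₗ ℝ w).nonpos_of_bddAbove_image_add hKne hCcone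
        ⟨u, forall_mem_image.2 fun y hy => (hsep y hy).le⟩ hc
    have h0C := zero_mem_of_isClosed_of_pos_smul_mem hCcl hCne hCcone
    have hsupp : suppR K w ≤ u := suppR_le hKne fun k hk => by
      rw [real_inner_comm]
      simpa using (hsep (k + 0) (add_mem_add hk h0C)).le
    have hxw : ⟪x, w⟫ ≤ suppR K w := mem_iInter₂.mp hx w hpolar
    rw [real_inner_comm] at hxw
    linarith
  · rintro _ ⟨k, hk, c, hc, rfl⟩
    refine mem_iInter₂.2 fun w hw => ?_
    have hcw : ⟪c, w⟫ ≤ 0 := real_inner_comm c w ▸ hw c hc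
    simp only [mem_ofPred_eq, inner_add_left]
    linarith [inner_le_suppR hKcomp hk w]
end

section
/- Proposition 7.1, unconditional form (sublinear gauge of a randomly translated deterministic cone): Let E be a finite-dimensional real inner product space, (Ω, μ) a probability space, X : Ω → E a map, and C ⊆ E a closed convex cone. Let g : (Ω → ℝ) → ℝ be subadditive (g (f + f') ≤ g f + g f') and positively homogeneous (g (c • f) = c * g f for all real c ≥ 0), and define φ : E → ℝ by φ w := g (fun ω => ⟪X ω, w⟫). Then ⋂_{w ∈ Cᵒ} {x ∈ E : ⟪x, w⟫ ≤ φ w} = K + C, where K := ⋂_{w ∈ E} {x ∈ E : ⟪x, w⟫ ≤ φ w} is the set-valued gauge G({X}) of the singleton, Cᵒ := {w ∈ E : ∀ c ∈ C, ⟪w, c⟫ ≤ 0} is the polar cone, and K + C is the Minkowski sum. In particular K is nonempty and compact, and the set-valued gauge of the random translate X + C of the cone C equals G({X}) + C. -/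
/-!
By Hahn–Banach, the sublinear function `φ w = g ⟪X, w⟫` is the support function of `K`: for every
`w` some `k ∈ K` has `⟪k, w⟫ = φ w`. Being convex, `φ` is continuous, hence bounded on the unit
ball, which bounds `K`. As `K` is compact, `K + C` is closed and convex, so it is the intersection
of its supporting half-spaces; the support function of `K + C` is `φ` on the polar cone of `C`
and `+∞` off it.
-/

open MeasureTheory RealInnerProductSpace Pointwise Set Filter Topology

section Sublinear

variable {E : Type*} [AddCommGroup E] [Module ℝ E] {φ : E → ℝ}

lemma neg_map_neg_le_of_sublinear (hhom : ∀ c : ℝ, 0 ≤ c → ∀ x, φ (c • x) = c * φ x)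
    (hadd : ∀ x y, φ (x + y) ≤ φ x + φ y) (x : E) : -φ (-x) ≤ φ x := by
  have h := hadd x (-x)
  rw [add_neg_cancel, ← zero_smul ℝ (0 : E), hhom 0 le_rfl, zero_mul] at h
  linarith

lemma exists_linearMap_le_sublinear_eq (hhom : ∀ c : ℝ, 0 ≤ c → ∀ x, φ (c • x) = c * φ x)
    (hadd : ∀ x y, φ (x + y) ≤ φ x + φ y) (w : E) :
    ∃ L : E →ₗ[ℝ] ℝ, (∀ x, L x ≤ φ x) ∧ L w = φ w := by
  have H : ∀ c : ℝ, c • w = 0 → c • φ w = 0 := by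
    intro c hc
    rcases smul_eq_zero.1 hc with rfl | rfl
    · exact zero_smul ℝ _
    · rw [← zero_smul ℝ (0 : E), hhom 0 le_rfl, zero_mul, smul_zero]
  let f : E →ₗ.[ℝ] ℝ := LinearPMap.mkSpanSingleton' w (φ w) H
  have hf : ∀ x : f.domain, f x ≤ φ x := by
    rintro ⟨x, hx⟩
    obtain ⟨c, rfl⟩ := Submodule.mem_span_singleton.1 hx
    rw [LinearPMap.mkSpanSingleton'_apply, smul_eq_mul]
    rcases le_or_gt 0 c with hc | hc
    · exact (hhom c hc w).ge
    · calc c * φ w = -φ (-(c • w)) := by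
            rw [← neg_smul, hhom (-c) (by linarith), neg_mul, neg_neg]
        _ ≤ φ (c • w) := neg_map_neg_le_of_sublinear hhom hadd _
  obtain ⟨L, hLf, hLφ⟩ :=
    exists_extension_of_le_sublinear f φ (fun c hc => hhom c hc.le) hadd hf
  exact ⟨L, hLφ, (hLf ⟨w, Submodule.mem_span_singleton_self w⟩).trans
    (LinearPMap.mkSpanSingleton'_apply_self _ _ _ _)⟩

lemma convexOn_univ_of_sublinear (hhom : ∀ c : ℝ, 0 ≤ c → ∀ x, φ (c • x) = c * φ x)
    (hadd : ∀ x y, φ (x + y) ≤ φ x + φ y) : ConvexOn ℝ univ φ :=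
  ⟨convex_univ, fun x _ y _ a b ha hb _ => by
    simpa only [hhom a ha, hhom b hb, smul_eq_mul] using hadd (a • x) (b • y)⟩

end Sublinear

lemma zero_mem_of_isClosed_of_smul_mem {E : Type*} [AddCommGroup E] [Module ℝ E]
    [TopologicalSpace E] [ContinuousSMul ℝ E] {C : Set E} (hCcl : IsClosed C)
    (hCne : C.Nonempty) (hCcone : ∀ c : ℝ, 0 < c → ∀ x ∈ C, c • x ∈ C) : (0 : E) ∈ C := by
  obtain ⟨x, hx⟩ := hCne
  have hlim : Tendsto (fun t : ℝ => t • x) (𝓝[>] 0) (𝓝 0) :=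
    ((continuous_id.smul continuous_const).tendsto' 0 0 (zero_smul ℝ x)).mono_left
      nhdsWithin_le_nhds
  exact hCcl.mem_of_tendsto hlim (eventually_nhdsWithin_of_forall fun t ht => hCcone t ht x hx)

section InnerProduct

variable {E : Type*} [NormedAddCommGroup E] [InnerProductSpace ℝ E]

lemma exists_pos_le_inner_smul {w c : E} (hwc : 0 < ⟪w, c⟫) (a : ℝ) :
    ∃ t : ℝ, 0 < t ∧ a ≤ ⟪w, t • c⟫ := by
  refine ⟨(|a| + 1) / ⟪w, c⟫, by positivity, ?_⟩
  rw [inner_smul_right, div_mul_cancel₀ _ hwc.ne']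
  linarith [le_abs_self a]

lemma convex_iInter_inner_le (φ : E → ℝ) : Convex ℝ (⋂ v, {x : E | ⟪x, v⟫ ≤ φ v}) :=
  convex_iInter fun v => convex_halfSpace_le (innerₛₗ ℝ |>.flip v).isLinear (φ v)

lemma isClosed_iInter_inner_le (φ : E → ℝ) : IsClosed (⋂ v, {x : E | ⟪x, v⟫ ≤ φ v}) :=
  isClosed_iInter fun v => isClosed_le (by fun_prop) continuous_const

lemma iInter_polar_inner_le_eq_add [CompleteSpace E] {φ : E → ℝ} {K C : Set E}
    (hKcpt : IsCompact K) (hKconv : Convex ℝ K) (hsupp : ∀ w, IsGreatest ((⟪·, w⟫) '' K) (φ w))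
    (hCcl : IsClosed C) (hCconv : Convex ℝ C) (hC0 : (0 : E) ∈ C)
    (hCcone : ∀ c : ℝ, 0 < c → ∀ x ∈ C, c • x ∈ C) :
    (⋂ w ∈ {w : E | ∀ c ∈ C, ⟪w, c⟫ ≤ 0}, {x : E | ⟪x, w⟫ ≤ φ w}) = K + C := by
  refine subset_antisymm (fun x hx => ?_) ?_
  · rw [← iInter_halfSpaces_eq (hKconv.add hCconv) (hCcl.add_left_of_isCompact hKcpt)]
    refine mem_iInter.2 fun l => ?_
    set w := (InnerProductSpace.toDual ℝ E).symm l
    have hl : ∀ y, l y = ⟪w, y⟫ := fun y => InnerProductSpace.toDual_symm_apply.symm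
    obtain ⟨k, hk, hkw : ⟪k, w⟫ = φ w⟩ := (hsupp w).1
    by_cases hw : ∀ c ∈ C, ⟪w, c⟫ ≤ 0
    · refine ⟨k, add_zero k ▸ add_mem_add hk hC0, ?_⟩
      rw [hl, hl, real_inner_comm x, real_inner_comm k, hkw]
      exact mem_iInter₂.1 hx w hw
    · push Not at hw
      obtain ⟨c, hc, hwc⟩ := hw
      obtain ⟨t, ht, hle⟩ := exists_pos_le_inner_smul hwc (⟪w, x⟫ - ⟪w, k⟫)
      refine ⟨k + t • c, add_mem_add hk (hCcone t ht c hc), ?_⟩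
      rw [hl, hl, inner_add_right]
      linarith
  · rintro _ ⟨k, hk, c, hc, rfl⟩
    refine mem_iInter₂.2 fun w hw => ?_
    have hkw : ⟪k, w⟫ ≤ φ w := (hsupp w).2 (mem_image_of_mem _ hk)
    show ⟪k + c, w⟫ ≤ φ w
    linarith [inner_add_left (𝕜 := ℝ) k c w, real_inner_comm w c, hw c hc]

variable [FiniteDimensional ℝ E] {φ : E → ℝ}

lemma isGreatest_inner_iInter_inner_le (hhom : ∀ c : ℝ, 0 ≤ c → ∀ x, φ (c • x) = c * φ x)
    (hadd : ∀ x y, φ (x + y) ≤ φ x + φ y) (w : E) :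
    IsGreatest ((⟪·, w⟫) '' ⋂ v, {x : E | ⟪x, v⟫ ≤ φ v}) (φ w) := by
  refine ⟨?_, forall_mem_image.2 fun x hx => mem_iInter.1 hx w⟩
  obtain ⟨L, hLφ, hLw⟩ := exists_linearMap_le_sublinear_eq hhom hadd w
  let k := (InnerProductSpace.toDual ℝ E).symm (LinearMap.toContinuousLinearMap L)
  have hk : ∀ y, ⟪k, y⟫ = L y := fun y => InnerProductSpace.toDual_symm_apply
  exact ⟨k, mem_iInter.2 fun v => (hk v).trans_le (hLφ v), (hk w).trans hLw⟩

lemma isCompact_iInter_inner_le (hhom : ∀ c : ℝ, 0 ≤ c → ∀ x, φ (c • x) = c * φ x)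
    (hadd : ∀ x y, φ (x + y) ≤ φ x + φ y) : IsCompact (⋂ v, {x : E | ⟪x, v⟫ ≤ φ v}) := by
  have hφ : Continuous φ := continuousOn_univ.1
    ((convexOn_univ_of_sublinear hhom hadd).continuousOn isOpen_univ)
  obtain ⟨M, hM⟩ := (isCompact_closedBall (0 : E) 1).bddAbove_image hφ.continuousOn
  refine Metric.isCompact_of_isClosed_isBounded (isClosed_iInter_inner_le φ)
    (isBounded_iff_forall_norm_le.2 ⟨M, fun x hx => ?_⟩)
  have hunit : ‖x‖⁻¹ • x ∈ Metric.closedBall (0 : E) 1 := by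
    rw [mem_closedBall_zero_iff, norm_smul, norm_inv, norm_norm]
    exact inv_mul_le_one
  -- also for `x = 0`, where `‖x‖⁻¹ = 0`
  calc ‖x‖ = ⟪x, ‖x‖⁻¹ • x⟫ := by
        rw [real_inner_smul_right, real_inner_self_eq_norm_sq, sq, ← mul_assoc, inv_mul_mul_self]
    _ ≤ φ (‖x‖⁻¹ • x) := mem_iInter.1 hx _
    _ ≤ M := hM (mem_image_of_mem φ hunit)

end InnerProduct

theorem gaugeSet_translate_cone_general
    {E : Type*} [NormedAddCommGroup E] [InnerProductSpace ℝ E] [FiniteDimensional ℝ E]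
    {Ω : Type*}
    (X : Ω → E)
    (C : Set E) (hCcl : IsClosed C) (hCconv : Convex ℝ C) (hCne : C.Nonempty)
    (hCcone : ∀ (c : ℝ), 0 < c → ∀ x ∈ C, c • x ∈ C)
    (g : (Ω → ℝ) → ℝ)
    (hsub : ∀ f f' : Ω → ℝ, g (f + f') ≤ g f + g f')
    (hhom : ∀ (c : ℝ), 0 ≤ c → ∀ f : Ω → ℝ, g (c • f) = c * g f)
    (φ : E → ℝ) (hφ : ∀ w, φ w = g (fun ω => (⟪X ω, w⟫ : ℝ)))
    (K : Set E) (hK : K = ⋂ w : E, {x : E | ⟪x, w⟫ ≤ φ w}) :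
    K.Nonempty ∧ IsCompact K ∧
      (⋂ w ∈ {w : E | ∀ c ∈ C, (⟪w, c⟫ : ℝ) ≤ 0}, {x : E | ⟪x, w⟫ ≤ φ w}) = K + C := by
  have hφadd : ∀ w w', φ (w + w') ≤ φ w + φ w' := fun w w' => by
    simpa only [hφ, inner_add_right, Pi.add_def] using hsub (⟪X ·, w⟫) (⟪X ·, w'⟫)
  have hφhom : ∀ c : ℝ, 0 ≤ c → ∀ w, φ (c • w) = c * φ w := fun c hc w => by
    simpa only [hφ, inner_smul_right, Pi.smul_def, smul_eq_mul] using hhom c hc (⟪X ·, w⟫)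
  subst hK
  have hsupp := isGreatest_inner_iInter_inner_le hφhom hφadd
  have hKcpt := isCompact_iInter_inner_le hφhom hφadd
  refine ⟨(hsupp 0).nonempty.of_image, hKcpt, ?_⟩
  exact iInter_polar_inner_le_eq_add hKcpt (convex_iInter_inner_le φ) hsupp hCcl hCconv
    (zero_mem_of_isClosed_of_smul_mem hCcl hCne hCcone) hCcone

/-- Proposition 7.1, unconditional form: for a sublinear gauge `g`, the set-valued
gauge of the randomly translated cone `X + C` (given by intersecting half-spaces over
directions in the polar cone) equals `G({X}) + C`, where the set-valued gauge `K = G({X})`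
of the singleton is nonempty and compact. -/
theorem gaugeSet_translate_cone
    {E : Type*} [NormedAddCommGroup E] [InnerProductSpace ℝ E] [FiniteDimensional ℝ E]
    {Ω : Type*} [MeasurableSpace Ω] (μ : Measure Ω) [IsProbabilityMeasure μ]
    (X : Ω → E)
    (C : Set E) (hCcl : IsClosed C) (hCconv : Convex ℝ C) (hCne : C.Nonempty)
    (hCcone : ∀ (c : ℝ), 0 < c → ∀ x ∈ C, c • x ∈ C)
    (g : (Ω → ℝ) → ℝ)
    (hsub : ∀ f f' : Ω → ℝ, g (f + f') ≤ g f + g f')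
    (hhom : ∀ (c : ℝ), 0 ≤ c → ∀ f : Ω → ℝ, g (c • f) = c * g f)
    (φ : E → ℝ) (hφ : ∀ w, φ w = g (fun ω => (⟪X ω, w⟫ : ℝ)))
    (K : Set E) (hK : K = ⋂ w : E, {x : E | ⟪x, w⟫ ≤ φ w}) :
    K.Nonempty ∧ IsCompact K ∧
      (⋂ w ∈ {w : E | ∀ c ∈ C, (⟪w, c⟫ : ℝ) ≤ 0}, {x : E | ⟪x, w⟫ ≤ φ w}) = K + C :=
  gaugeSet_translate_cone_general X C hCcl hCconv hCne hCcone g hsub hhom φ hφ K hK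
end

section
/- Proposition 7.2, unconditional form (gauge of a random cone): Let E be a finite-dimensional real inner product space, (Ω, μ) a probability space, and C : Ω → Set E a set-valued map such that C ω is a closed convex cone containing 0 for every ω, and such that {ω : w ∈ (C ω)ᵒ} is μ-measurable for every w ∈ E. Let g : (Ω → EReal) → EReal satisfy: (a) g f = 0 for every f : Ω → EReal with f = 0 μ-almost everywhere, and (b) g f = ⊤ for every measurable f : Ω → EReal with μ {ω : f ω = ⊤} > 0 (sensitivity with respect to infinity). Then G(C) = Mᵒ, where M := {w ∈ E : μ {ω : w ∈ (C ω)ᵒ} = 1} is the set of fixed points of the polar cone Cᵒ and Mᵒ := {x ∈ E : ∀ w ∈ M, ⟪x, w⟫ ≤ 0}. -/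
open MeasureTheory RealInnerProductSpace

/-!
For a cone `A` containing `0`, the support function `suppFn A w` is `0` when `w` lies in
the polar cone of `A` and `⊤` otherwise. Hence `ω ↦ suppFn (C ω) w` is the `{0, ⊤}`-valued
function of the event `w ∈ (C ω)ᵒ`, and the two axioms on `g` evaluate it to `0` if that event has
probability one and to `⊤` otherwise. So `G(C)` is cut out by the half-spaces `⟪x, w⟫ ≤ 0`
for the unit vectors `w` of `M`, and since `M` is closed under positive scaling these are
all the half-spaces of `Mᵒ`.
-/

section Polar

variable {E : Type*} [NormedAddCommGroup E] [InnerProductSpace ℝ E]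

def polarCone (A : Set E) : Set E := {w | ∀ c ∈ A, ⟪w, c⟫ ≤ 0}

lemma smul_mem_polarCone_iff {A : Set E} {w : E} {t : ℝ} (ht : 0 < t) :
    t • w ∈ polarCone A ↔ w ∈ polarCone A := by
  simp only [polarCone, Set.mem_ofPred_eq, real_inner_smul_left]
  exact forall₂_congr fun c _ => by
    rw [← smul_eq_mul]
    exact smul_nonpos_iff_nonpos_of_pos_left ht

lemma suppFn_eq_zero_of_mem_polarCone {A : Set E} {w : E} (h0 : 0 ∈ A)
    (hw : w ∈ polarCone A) : suppFn A w = 0 := by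
  refine le_antisymm (iSup₂_le fun c hc => ?_) ?_
  · rw [real_inner_comm]
    exact_mod_cast hw c hc
  · simpa [suppFn] using le_iSup₂ (f := fun x (_ : x ∈ A) => ((⟪x, w⟫ : ℝ) : EReal)) 0 h0

lemma suppFn_eq_top_of_notMem_polarCone {A : Set E} {w : E}
    (hA : ∀ t : ℝ, 0 < t → ∀ x ∈ A, t • x ∈ A) (hw : w ∉ polarCone A) :
    suppFn A w = ⊤ := by
  obtain ⟨c, hc, hcw⟩ : ∃ c ∈ A, 0 < ⟪c, w⟫ := by
    simpa [polarCone, real_inner_comm] using hw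
  refine EReal.eq_top_iff_forall_lt _ |>.mpr fun r => ?_
  set t : ℝ := (|r| + 1) / ⟪c, w⟫
  have ht : 0 < t := by positivity
  have hr : r < ⟪t • c, w⟫ := by
    rw [real_inner_smul_left, div_mul_cancel₀ _ hcw.ne']
    linarith [le_abs_self r]
  calc (r : EReal) < ((⟪t • c, w⟫ : ℝ) : EReal) := by exact_mod_cast hr
    _ ≤ suppFn A w :=
      le_iSup₂ (f := fun x (_ : x ∈ A) => ((⟪x, w⟫ : ℝ) : EReal)) _ (hA t ht c hc)

lemma suppFn_of_cone {A : Set E} (h0 : 0 ∈ A) (hA : ∀ t : ℝ, 0 < t → ∀ x ∈ A, t • x ∈ A)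
    (w : E) : suppFn A w = (polarCone A)ᶜ.indicator (fun _ => ⊤) w := by
  by_cases hw : w ∈ polarCone A
  · rw [Set.indicator_of_notMem (Set.notMem_compl_iff.mpr hw)]
    exact suppFn_eq_zero_of_mem_polarCone h0 hw
  · rw [Set.indicator_of_mem hw]
    exact suppFn_eq_top_of_notMem_polarCone hA hw

lemma forall_inner_nonpos_iff_of_norm_eq_one {M : Set E}
    (hM : ∀ t : ℝ, 0 < t → ∀ w ∈ M, t • w ∈ M) (x : E) :
    (∀ w ∈ M, ‖w‖ = 1 → ⟪x, w⟫ ≤ 0) ↔ ∀ w ∈ M, ⟪x, w⟫ ≤ 0 := by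
  refine ⟨fun h w hw => ?_, fun h w hw _ => h w hw⟩
  rcases eq_or_ne w 0 with rfl | hw0
  · simp
  have hn : 0 < ‖w‖⁻¹ := inv_pos.mpr (norm_pos_iff.mpr hw0)
  have := h _ (hM _ hn w hw) (norm_smul_inv_norm hw0)
  rw [real_inner_smul_right] at this
  exact nonpos_of_mul_nonpos_right this hn

end Polar

lemma apply_indicator_compl_top {Ω : Type*} [MeasurableSpace Ω] (μ : Measure Ω)
    [IsProbabilityMeasure μ] {g : (Ω → EReal) → EReal}
    (ha : ∀ f : Ω → EReal, (∀ᵐ ω ∂μ, f ω = 0) → g f = 0)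
    (hb : ∀ f : Ω → EReal, Measurable f → 0 < μ {ω | f ω = ⊤} → g f = ⊤)
    {s : Set Ω} (hs : MeasurableSet s) :
    g (sᶜ.indicator (fun _ => ⊤)) = if μ s = 1 then 0 else ⊤ := by
  split_ifs with h
  · refine ha _ ?_
    filter_upwards [mem_ae_iff.mpr ((prob_compl_eq_zero_iff hs).mpr h)] with ω hω
    simp [hω]
  · refine hb _ (measurable_const.indicator hs.compl) ?_
    have : {ω | sᶜ.indicator (fun _ => (⊤ : EReal)) ω = ⊤} = sᶜ := by
      ext ω
      by_cases hω : ω ∈ s <;> simp [hω]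
    rw [this, pos_iff_ne_zero, Ne, prob_compl_eq_zero_iff hs]
    exact h

theorem gaugeSet_random_cone_general
    {E : Type*} [NormedAddCommGroup E] [InnerProductSpace ℝ E]
    {Ω : Type*} [MeasurableSpace Ω] (μ : Measure Ω) [IsProbabilityMeasure μ]
    (C : Ω → Set E)
    (hC0 : ∀ ω, (0 : E) ∈ C ω)
    (hCcone : ∀ ω, ∀ (c : ℝ), 0 < c → ∀ x ∈ C ω, c • x ∈ C ω)
    (hmeas : ∀ w : E, MeasurableSet {ω | ∀ c ∈ C ω, (⟪w, c⟫ : ℝ) ≤ 0})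
    (g : (Ω → EReal) → EReal)
    (ha : ∀ f : Ω → EReal, (∀ᵐ ω ∂μ, f ω = 0) → g f = 0)
    (hb : ∀ f : Ω → EReal, Measurable f → 0 < μ {ω | f ω = ⊤} → g f = ⊤) :
    gaugeSet g C
      = {x : E | ∀ w ∈ {w : E | μ {ω | ∀ c ∈ C ω, (⟪w, c⟫ : ℝ) ≤ 0} = 1},
          (⟪x, w⟫ : ℝ) ≤ 0} := by
  set M : Set E := {w | μ {ω | w ∈ polarCone (C ω)} = 1}
  have hg (w : E) : g (fun ω => suppFn (C ω) w) = if w ∈ M then 0 else ⊤ := by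
    have : (fun ω => suppFn (C ω) w) =
        {ω | w ∈ polarCone (C ω)}ᶜ.indicator (fun _ => ⊤) := by
      funext ω
      rw [suppFn_of_cone (hC0 ω) (hCcone ω)]
      rfl
    rw [this]
    exact apply_indicator_compl_top μ ha hb (hmeas w)
  have hM : ∀ t : ℝ, 0 < t → ∀ w ∈ M, t • w ∈ M := fun t ht w hw => by
    simpa only [M, Set.mem_ofPred_eq, smul_mem_polarCone_iff ht] using hw
  ext x
  simp only [gaugeSet, Set.mem_iInter, mem_sphere_iff_norm, sub_zero, hg]
  refine (forall_congr' fun w => ?_).trans (forall_inner_nonpos_iff_of_norm_eq_one hM x)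
  split_ifs with hw <;> simp [hw]

/-- Proposition 7.2, unconditional form: for a gauge `g` vanishing on a.e. zero
functions and sensitive with respect to infinity, the set-valued gauge of a random
closed convex cone `C` is the polar cone of the set of fixed points of the polar
cone of `C`. -/
theorem gaugeSet_random_cone
    {E : Type*} [NormedAddCommGroup E] [InnerProductSpace ℝ E] [FiniteDimensional ℝ E]
    {Ω : Type*} [MeasurableSpace Ω] (μ : Measure Ω) [IsProbabilityMeasure μ]
    (C : Ω → Set E)
    (hCcl : ∀ ω, IsClosed (C ω)) (hCconv : ∀ ω, Convex ℝ (C ω))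
    (hC0 : ∀ ω, (0 : E) ∈ C ω)
    (hCcone : ∀ ω, ∀ (c : ℝ), 0 < c → ∀ x ∈ C ω, c • x ∈ C ω)
    (hmeas : ∀ w : E, MeasurableSet {ω | ∀ c ∈ C ω, (⟪w, c⟫ : ℝ) ≤ 0})
    (g : (Ω → EReal) → EReal)
    (ha : ∀ f : Ω → EReal, (∀ᵐ ω ∂μ, f ω = 0) → g f = 0)
    (hb : ∀ f : Ω → EReal, Measurable f → 0 < μ {ω | f ω = ⊤} → g f = ⊤) :
    gaugeSet g C
      = {x : E | ∀ w ∈ {w : E | μ {ω | ∀ c ∈ C ω, (⟪w, c⟫ : ℝ) ≤ 0} = 1},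
          (⟪x, w⟫ : ℝ) ≤ 0} :=
  gaugeSet_random_cone_general μ C hC0 hCcone hmeas g ha hb
end
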